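/- Let N be the complete NBW over Σ = {a, b} with states {q₀, q₁, q₂, q₃}, initial state q₀, accepting states {q₁, q₂}, and transitions δ(q₀,a) = {q₁, q₂}, δ(q₀,b) = {q₃}, δ(q₁,a) = {q₁}, δ(q₁,b) = {q₃}, δ(q₂,a) = {q₃}, δ(q₂,b) = {q₂}, δ(q₃,a) = δ(q₃,b) = {q₃}. Let M be the Markov chain with states {s₀, s₁, s₂}, a single action, labels ℓ(s₀) = ℓ(s₁) = a and ℓ(s₂) = b, and transitions: from s₀ to s₁ with probability 1/3 and to s₂ with probability 2/3; from s₁ to s₁ with probability 1; from s₂ to s₂ with probability 1. Then L(N) = {a^ω, a b^ω}, PSem_N^M(s₀) = 1, PSyn_N^M(s₀) = 2/3, and consequently N is not GFM. -/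

import Mathlib

open scoped Classical ENNReal

/-! ## ω-words -/

/-- Cons a letter onto an ω-word. -/
def wcons {L : Type*} (σ : L) (α : ℕ → L) : ℕ → L
  | 0 => σ
  | n + 1 => α n

/-- Prepend a finite word to an ω-word. -/
def wApp {L : Type*} : List L → (ℕ → L) → (ℕ → L)
  | [], α => α
  | x :: xs, α => wcons x (wApp xs α)

/-- The length-`n` prefix of an ω-word, as a list. -/
def prefList {L : Type*} (α : ℕ → L) (n : ℕ) : List L :=
  List.ofFn (fun i : Fin n => α i)

/-- The starting position of the `i`-th block in an infinite concatenation of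
finite blocks `u 0, u 1, u 2, …`. -/
def blockStart {L : Type*} (u : ℕ → List L) (i : ℕ) : ℕ :=
  ∑ j ∈ Finset.range i, (u j).length

/-- The ω-word `α` is the infinite concatenation of the finite blocks `u 0, u 1, …`. -/
def OmegaConcatOf {L : Type*} (u : ℕ → List L) (α : ℕ → L) : Prop :=
  ∀ (i k : ℕ) (h : k < (u i).length), α (blockStart u i + k) = (u i).get ⟨k, h⟩

/-! ## Nondeterministic Büchi word automata -/

/-- A nondeterministic Büchi word automaton (NBW) with alphabet `L` and state space `Q`:
an initial state, a transition function and a set of accepting (final) states. -/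
structure NBW (L : Type*) (Q : Type*) where
  init : Q
  step : Q → L → Set Q
  acc : Set Q

namespace NBW

variable {L Q : Type*}

/-- An NBW is complete if every state has a successor on every letter. -/
def Complete (N : NBW L Q) : Prop := ∀ q σ, (N.step q σ).Nonempty

/-- `r` is a run of `N` on the ω-word `α` starting in state `q`. -/
def IsRunFrom (N : NBW L Q) (q : Q) (α : ℕ → L) (r : ℕ → Q) : Prop :=
  r 0 = q ∧ ∀ i, r (i + 1) ∈ N.step (r i) (α i)

/-- A run is accepting if some accepting state occurs infinitely often in it. -/
def Accepting (N : NBW L Q) (r : ℕ → Q) : Prop :=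
  ∃ q ∈ N.acc, ∀ n, ∃ m, n ≤ m ∧ r m = q

/-- The ω-language of an NBW: the set of ω-words having an accepting run. -/
def lang (N : NBW L Q) : Set (ℕ → L) :=
  {α | ∃ r, N.IsRunFrom N.init α r ∧ N.Accepting r}

/-- The same NBW with initial state `q` (denoted `C_q` in the paper). -/
def withInit (N : NBW L Q) (q : Q) : NBW L Q := ⟨q, N.step, N.acc⟩

end NBW

/-! ## NFAs on finite words -/

/-- A nondeterministic finite automaton with a single initial state. -/
structure NFAo (L : Type*) (Q : Type*) where
  init : Q
  step : Q → L → Set Q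
  acc : Set Q

namespace NFAo

variable {L Q : Type*}

/-- An NFA is complete if every state has a successor on every letter. -/
def Complete (M : NFAo L Q) : Prop := ∀ q σ, (M.step q σ).Nonempty

/-- The set of states reachable from a set of states on a finite word. -/
def evalFrom (M : NFAo L Q) (S : Set Q) (w : List L) : Set Q :=
  w.foldl (fun S σ => ⋃ q ∈ S, M.step q σ) S

/-- The language of an NFA: finite words having a run from the initial state ending
in an accepting state. -/
def lang (M : NFAo L Q) : Set (List L) :=
  {w | ∃ q ∈ M.evalFrom {M.init} w, q ∈ M.acc}

/-! ### The `A_f` construction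
The fresh letter `$` is modelled by `none : Option L` and the fresh state `f`
by `none : Option Q`. -/

/-- Transitions of `A_f` out of an original state `q`. -/
def dollarStepAux (M : NFAo L Q) (q : Q) : Option L → Set (Option Q)
  | some σ => some '' M.step q σ
  | none => if q ∈ M.acc then {none} else {some M.init}

/-- The transition function of `A_f`: on the fresh state `f` it behaves like the
initial state. -/
def dollarStep (M : NFAo L Q) : Option Q → Option L → Set (Option Q)
  | some q, σ => M.dollarStepAux q σ
  | none, σ => M.dollarStepAux M.init σ

/-- The Büchi automaton `A_f` obtained from the complete NFA `A` by adding the fresh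
letter `$ = none` and the fresh accepting state `f = none`. -/
def dollar (M : NFAo L Q) : NBW (Option L) (Option Q) :=
  ⟨some M.init, M.dollarStep, {none}⟩

end NFAo

/-- The one-state complete NFA over `L` whose single state is both initial and
accepting; its language is all of `L*`. -/
def unitNFA (L : Type*) : NFAo L Unit := ⟨(), fun _ _ => {()}, Set.univ⟩

/-! ## The fork construction -/

/-- The state space of `fork(A_f)`: the states of `A_f` (where `af none` is the state `f`),
the states `b0 = q₀'` and `bf = f'` of `B_f` (for the one-state universal NFA `B`),
and the three fresh states `q_F`, `q_A`, `q_B`. -/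
inductive ForkState (Q : Type*) where
  | af : Option Q → ForkState Q
  | b0 : ForkState Q
  | bf : ForkState Q
  | qF : ForkState Q
  | qA : ForkState Q
  | qB : ForkState Q
  deriving DecidableEq, Fintype

/-- The transition function of `fork(A_f)`. -/
def forkStep {L Q : Type*} (M : NFAo L Q) :
    ForkState Q → Option L → Set (ForkState Q)
  | .af q, σ => ForkState.af '' M.dollarStep q σ
  | .b0, some _ => {.b0}
  | .b0, none => {.bf}
  | .bf, some _ => {.b0}
  | .bf, none => {.bf}
  | .qF, _ => {.qA, .qB}
  | .qA, _ => {.af (some M.init)}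
  | .qB, some _ => ∅
  | .qB, none => {.b0}

/-- The NBW `fork(A_f)` of the paper (for the complete NFA `A = M`). -/
def fork {L Q : Type*} (M : NFAo L Q) : NBW (Option L) (ForkState Q) :=
  ⟨.qF, forkStep M, {.af none, .bf}⟩

/-! ## Markov decision processes -/

/-- A state-labelled Markov decision process with states `S`, actions `A` and labels `L`:
a partial probabilistic transition function and a labelling of states. -/
structure MDP (S A L : Type*) where
  prob : S → A → Option (PMF S)
  label : S → L

namespace MDP

variable {S A L : Type*}

/-- The action `a` is available (enabled) in state `s`. -/
def enabled (M : MDP S A L) (s : S) (a : A) : Prop := (M.prob s a).isSome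

/-- Every state has at least one available action (assumed for all MDPs). -/
def NonBlocking (M : MDP S A L) : Prop := ∀ s, ∃ a, M.enabled s a

/-- An MDP is a Markov chain if every state has exactly one available action. -/
def IsMC (M : MDP S A L) : Prop := ∀ s, ∃! a, M.enabled s a

/-- A strategy: given a finite run (the past state-action pairs and the current state),
a distribution over the actions available at the current state. -/
structure Strategy (M : MDP S A L) where
  act : List (S × A) → S → PMF A
  supp : ∀ h s, (∃ a, M.enabled s a) → ∀ a ∈ (act h s).support, M.enabled s a

/-- The probability that, starting from `s` with past history `hist`, the MDP controlled
by the strategy `μ` produces exactly the finite run `l` (a list of state-action pairs). -/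
noncomputable def pathWeightAux (M : MDP S A L) (μ : M.Strategy) :
    List (S × A) → S → List (S × A) → ℝ≥0∞
  | _, _, [] => 1
  | hist, s, (s', a) :: rest =>
    if s' = s then
      μ.act hist s a *
        match rest with
        | [] => 1
        | (s'', _) :: _ =>
          (match M.prob s a with
           | none => 0
           | some p => p s'') * pathWeightAux M μ (hist ++ [(s, a)]) s'' rest
    else 0

/-- `E` is a cylinder set at horizon `n`: membership only depends on the first `n`
state-action pairs of a run. -/
def IsCylinderAt {X : Type*} (E : Set (ℕ → X)) (n : ℕ) : Prop :=
  ∀ r r' : ℕ → X, prefList r n = prefList r' n → r ∈ E → r' ∈ E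

/-- The probability of the horizon-`n` cylinder set `E` of runs, starting from `s₀`,
under strategy `μ`. -/
noncomputable def horizonProb [Fintype S] [Fintype A] (M : MDP S A L) (μ : M.Strategy)
    (s₀ : S) (n : ℕ) (E : Set (ℕ → S × A)) : ℝ≥0∞ :=
  ∑ v : Fin n → S × A,
    if ∃ r ∈ E, prefList r n = List.ofFn v then pathWeightAux M μ [] s₀ (List.ofFn v)
    else 0

/-- The cylinder premeasure: defined on cylinder sets via finite-horizon probabilities
(and `∞` on non-cylinder sets). -/
noncomputable def preMeasure [Fintype S] [Fintype A] (M : MDP S A L) (μ : M.Strategy)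
    (s₀ : S) (E : Set (ℕ → S × A)) : ℝ≥0∞ :=
  ⨅ (n : ℕ) (_ : IsCylinderAt E n), horizonProb M μ s₀ n E

theorem preMeasure_empty [Fintype S] [Fintype A] (M : MDP S A L) (μ : M.Strategy)
    (s₀ : S) : preMeasure M μ s₀ ∅ = 0 := by
  refine le_antisymm ?_ (zero_le)
  have hcyl : IsCylinderAt (∅ : Set (ℕ → S × A)) 0 := fun r r' _ h => h.elim
  calc preMeasure M μ s₀ ∅ ≤ horizonProb M μ s₀ 0 ∅ := iInf₂_le 0 hcyl
    _ = 0 := by simp [horizonProb]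

/-- The standard probability measure `Pr^μ_{s₀}` on the space of infinite runs
(as the Carathéodory outer measure extending the cylinder premeasure). -/
noncomputable def Pr [Fintype S] [Fintype A] (M : MDP S A L) (μ : M.Strategy) (s₀ : S) :
    MeasureTheory.OuterMeasure (ℕ → S × A) :=
  MeasureTheory.OuterMeasure.ofFunction (preMeasure M μ s₀) (preMeasure_empty M μ s₀)

/-- The product MDP `M × N` of an MDP and an NBW. -/
noncomputable def prod {Q : Type*} (M : MDP S A L) (N : NBW L Q) : MDP (S × Q) (A × Q) L where
  prob := fun sq aq =>
    if aq.2 ∈ N.step sq.2 (M.label sq.1) then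
      (M.prob sq.1 aq.1).map (PMF.map fun s' => (s', aq.2))
    else none
  label := fun sq => M.label sq.1

end MDP

/-- The semantic satisfaction probability `PSem_N^M(s₀)`: the optimal probability that
the label sequence of a run of `M` from `s₀` is in the language of `N`. -/
noncomputable def PSem {S A L Q : Type*} [Fintype S] [Fintype A] (N : NBW L Q)
    (M : MDP S A L) (s₀ : S) : ℝ≥0∞ :=
  ⨆ μ : M.Strategy, MDP.Pr M μ s₀ {r | (fun n => M.label (r n).1) ∈ N.lang}

/-- The syntactic satisfaction probability `PSyn_N^M(s₀)`: the optimal probability that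
a run of the product MDP `M × N` from `(s₀, q₀)` visits `F^× = S × F` infinitely often. -/
noncomputable def PSyn {S A L Q : Type*} [Fintype S] [Fintype A] [Fintype Q] (N : NBW L Q)
    (M : MDP S A L) (s₀ : S) : ℝ≥0∞ :=
  ⨆ μ : (M.prod N).Strategy,
    MDP.Pr (M.prod N) μ (s₀, N.init) {r | ∀ n, ∃ m, n ≤ m ∧ (r m).1.2 ∈ N.acc}

namespace NBW

/-- An NBW is good-for-MDPs (GFM) if syntactic and semantic satisfaction probabilities
coincide for every finite MDP and every initial state. -/
def GFM {L Q : Type*} [Fintype Q] (N : NBW L Q) : Prop :=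
  ∀ (S A : Type) [Fintype S] [Fintype A] (M : MDP S A L),
    M.NonBlocking → ∀ s₀ : S, PSyn N M s₀ = PSem N M s₀

/-- An NBW is qualitatively good-for-MDPs (QGFM) if, whenever the semantic satisfaction
probability is 1, so is the syntactic one, for every finite MDP and initial state. -/
def QGFM {L Q : Type*} [Fintype Q] (N : NBW L Q) : Prop :=
  ∀ (S A : Type) [Fintype S] [Fintype A] (M : MDP S A L),
    M.NonBlocking → ∀ s₀ : S, PSem N M s₀ = 1 → PSyn N M s₀ = 1

end NBW

/-! ## Safety automata -/

/-- A safety automaton: an automaton in which every state is accepting, so only the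
initial state and the transitions matter. -/
structure SafetyAut (L Q : Type*) where
  init : Q
  step : Q → L → Set Q

/-- The language of a safety automaton: the ω-words on which it has an infinite run. -/
def SafetyAut.lang {L Q : Type*} (T : SafetyAut L Q) : Set (ℕ → L) :=
  {α | ∃ r : ℕ → Q, r 0 = T.init ∧ ∀ i, r (i + 1) ∈ T.step (r i) (α i)}

/-- A safety automaton is good-for-games (GFG) if its nondeterminism can be resolved
based only on the history: a strategy `g` picks, for each finite word, a current state,
following a transition on every finite word that is a prefix of a word of the language. -/
def SafetyAut.GFG {L Q : Type*} (T : SafetyAut L Q) : Prop :=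
  ∃ g : List L → Q, g [] = T.init ∧
    ∀ (w : List L) (σ : L),
      (∃ α ∈ T.lang, prefList α (w.length + 1) = w ++ [σ]) →
      g (w ++ [σ]) ∈ T.step (g w) σ

namespace NBW

variable {L Q : Type*}

/-- A state `q` of `C` is productive if `L(C_q) ≠ ∅`. -/
def Productive (C : NBW L Q) (q : Q) : Prop := (C.withInit q).lang.Nonempty

/-- A state `q` of `C` is a QGFM state if `C_q` is QGFM. -/
def QGFMState [Fintype Q] (C : NBW L Q) (q : Q) : Prop := (C.withInit q).QGFM

/-- A transition `(q, σ, r)` of `C` is residual if `L(C_r) = σ⁻¹ L(C_q)`. -/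
def ResidualTrans (C : NBW L Q) (q : Q) (σ : L) (r : Q) : Prop :=
  r ∈ C.step q σ ∧ (C.withInit r).lang = {α | wcons σ α ∈ (C.withInit q).lang}

/-- The safety automaton `S` associated with the candidate NBW `C`: its states are the
productive QGFM states of `C` and its transitions are the residual transitions of `C`
between such states. -/
def safetyS [Fintype Q] (C : NBW L Q) : SafetyAut L Q :=
  ⟨C.init, fun q σ =>
    {r | (C.Productive q ∧ C.QGFMState q) ∧ (C.Productive r ∧ C.QGFMState r) ∧
      C.ResidualTrans q σ r}⟩

/-- The safety automaton `T` associated with the candidate NBW `C`: its states are the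
productive states of `C` and its transitions are all transitions of `C` between them. -/
def safetyT (C : NBW L Q) : SafetyAut L Q :=
  ⟨C.init, fun q σ => {r | C.Productive q ∧ C.Productive r ∧ r ∈ C.step q σ}⟩

end NBW
/-- The NBW of Figure 1, over `Σ = {a, b}` modelled as `Bool` with `a = true`,
`b = false`; states `q₀,…,q₃` modelled as `Fin 4`. -/
def exNBW : NBW Bool (Fin 4) where
  init := 0
  step := fun q σ =>
    if q = 0 then (if σ = true then {1, 2} else {3})
    else if q = 1 then (if σ = true then {1} else {3})
    else if q = 2 then (if σ = true then {3} else {2})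
    else {3}
  acc := {1, 2}

/-- The distribution of the Markov chain of Figure 2(a) from `s₀`: to `s₁` with
probability `1/3` and to `s₂` with probability `2/3`. -/
noncomputable def exPMF : PMF (Fin 3) :=
  PMF.ofFintype ![0, 1/3, 2/3] (by
    simp only [Fin.sum_univ_three, Matrix.cons_val_zero, Matrix.cons_val_one,
      Matrix.head_cons, Matrix.cons_val_two, Matrix.tail_cons, zero_add,
      ENNReal.div_add_div_same]
    norm_num
    exact ENNReal.div_self (by norm_num) (by norm_num))

/-- The Markov chain of Figure 2(a): states `s₀,s₁,s₂` modelled as `Fin 3`, one action,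
labels `ℓ(s₀) = ℓ(s₁) = a = true`, `ℓ(s₂) = b = false`. -/
noncomputable def exMC : MDP (Fin 3) Unit Bool where
  prob := fun s _ =>
    some (if s = 0 then exPMF else if s = 1 then PMF.pure 1 else PMF.pure 2)
  label := fun s => if s = 2 then false else true

/-! The first letter of an accepted word is `a`, and on it `N` must commit to `q₁` (which then
only survives on `a^ω`) or to `q₂` (which only survives on `a b^ω`); every other run falls into
the sink `q₃`. The chain produces `a^ω` with probability `1/3` and `a b^ω` with probability `2/3`,
so `PSem = 1`. In the product, however, the commitment is made while reading `ℓ(s₀)`, before the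
chain has chosen between `s₁` and `s₂`: a strategy that picks `q₁` with probability `p` wins with
probability `p/3 + 2(1-p)/3 ≤ 2/3`, with equality for `p = 0`. -/

lemma prefList_succ {X : Type*} (r : ℕ → X) (n : ℕ) :
    prefList r (n + 1) = r 0 :: prefList (fun i => r (i + 1)) n := by
  simp [prefList, List.ofFn_succ]

lemma prefList_add_two {X : Type*} (r : ℕ → X) (n : ℕ) :
    prefList r (n + 2) = prefList r n ++ [r n, r (n + 1)] := by
  rw [prefList, prefList, List.ofFn_add]
  simp [List.ofFn_succ, Fin.natAdd]

lemma prefList_wcons_const {X : Type*} (x y : X) (n : ℕ) :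
    prefList (wcons x fun _ => y) (n + 1) = x :: List.replicate n y := by
  rw [prefList_succ]
  simp [prefList, wcons]

lemma PMF.map_prodMk_right_apply {α β : Type*} (p : PMF α) (b : β) (a : α) (b' : β) :
    p.map (fun x => (x, b)) (a, b') = if b' = b then p a else 0 := by
  rw [PMF.map_apply]
  split_ifs with hb
  · rw [tsum_eq_single a] <;> simp_all [eq_comm]
  · simp [hb]

lemma PMF.apply_add_apply_le_one {α : Type*} (p : PMF α) {a b : α} (hab : a ≠ b) :
    p a + p b ≤ 1 :=
  (Finset.sum_pair hab).symm.trans_le ((ENNReal.sum_le_tsum _).trans_eq p.tsum_coe)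

def NBW.accRuns {L Q S A : Type*} (N : NBW L Q) : Set (ℕ → (S × Q) × (A × Q)) :=
  {r | ∀ n, ∃ m, n ≤ m ∧ (r m).1.2 ∈ N.acc}

namespace MDP

variable {S A L : Type*}

noncomputable def stepProb (M : MDP S A L) (s : S) (a : A) (t : S) : ℝ≥0∞ :=
  (M.prob s a).elim 0 fun p => p t

/-- The probability of the cylinder of runs from `s₀` that start with the first `n` steps
of `r`. -/
noncomputable def prefixWeight (M : MDP S A L) (μ : M.Strategy) (s₀ : S) (r : ℕ → S × A)
    (n : ℕ) : ℝ≥0∞ :=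
  M.pathWeightAux μ [] s₀ (prefList r n)

noncomputable def Strategy.ofFun (M : MDP S A L) (f : S → A) (hf : ∀ s, M.enabled s (f s)) :
    M.Strategy where
  act _ s := PMF.pure (f s)
  supp _ s _ a ha := by
    rw [PMF.support_pure, Set.mem_singleton_iff] at ha
    exact ha ▸ hf s

lemma Strategy.ofFun_act {M : MDP S A L} {f : S → A} {hf : ∀ s, M.enabled s (f s)}
    {h : List (S × A)} {s : S} {a : A} (ha : f s = a) :
    (Strategy.ofFun M f hf).act h s a = 1 := by
  simp [Strategy.ofFun, ha]

section PathWeight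

variable {M : MDP S A L} {μ : M.Strategy}

lemma pathWeightAux_singleton (h : List (S × A)) (s : S) (a : A) :
    M.pathWeightAux μ h s [(s, a)] = μ.act h s a := by
  simp [pathWeightAux]

lemma pathWeightAux_cons_cons (h : List (S × A)) (s : S) (x y : S × A) (l : List (S × A)) :
    M.pathWeightAux μ h s (x :: y :: l) =
      if x.1 = s then
        μ.act h s x.2 * (M.stepProb s x.2 y.1 * M.pathWeightAux μ (h ++ [(s, x.2)]) y.1 (y :: l))
      else 0 := by
  obtain ⟨s', a⟩ := x
  obtain ⟨t, b⟩ := y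
  simp only [pathWeightAux, stepProb]
  cases M.prob s a <;> rfl

lemma fst_eq_of_pathWeightAux_ne_zero {h : List (S × A)} {s : S} {x : S × A}
    {l : List (S × A)} (hw : M.pathWeightAux μ h s (x :: l) ≠ 0) : x.1 = s := by
  obtain ⟨s', a⟩ := x
  by_contra hne
  exact hw (by simp [pathWeightAux, hne])

lemma stepProb_ne_zero_of_pathWeightAux_ne_zero {h : List (S × A)} {s : S} {x y : S × A}
    {l : List (S × A)} (hw : M.pathWeightAux μ h s (x :: y :: l) ≠ 0) :
    M.stepProb x.1 x.2 y.1 ≠ 0 := by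
  rw [pathWeightAux_cons_cons] at hw
  split_ifs at hw with hx
  · exact hx ▸ left_ne_zero_of_mul (right_ne_zero_of_mul hw)
  · exact (hw rfl).elim

lemma pathWeightAux_ne_zero_of_append (l₂ : List (S × A)) :
    ∀ (l₁ h : List (S × A)) (s : S), M.pathWeightAux μ h s (l₁ ++ l₂) ≠ 0 →
      ∃ h' s', M.pathWeightAux μ h' s' l₂ ≠ 0
  | [], h, s, hw => ⟨h, s, hw⟩
  | x :: l₁, h, s, hw => by
    rcases hl : l₁ ++ l₂ with _ | ⟨y, l⟩
    · rw [List.append_eq_nil_iff] at hl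
      exact ⟨h, s, by simp [hl.2, pathWeightAux]⟩
    · rw [List.cons_append, hl, pathWeightAux_cons_cons] at hw
      split_ifs at hw
      · exact pathWeightAux_ne_zero_of_append l₂ l₁ _ _
          (hl ▸ right_ne_zero_of_mul (right_ne_zero_of_mul hw))
      · exact (hw rfl).elim

lemma pathWeightAux_replicate {y : S × A} (hy : M.stepProb y.1 y.2 y.1 = 1)
    (hact : ∀ h, μ.act h y.1 y.2 = 1) :
    ∀ (n : ℕ) (h : List (S × A)), M.pathWeightAux μ h y.1 (List.replicate n y) = 1
  | 0, _ => rfl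
  | 1, h => by rw [List.replicate_one, ← hact h]; exact pathWeightAux_singleton h y.1 y.2
  | n + 2, h => by
    rw [List.replicate_succ, List.replicate_succ, pathWeightAux_cons_cons, if_pos rfl, hact, hy,
      ← List.replicate_succ, pathWeightAux_replicate hy hact (n + 1), one_mul, one_mul]

variable {s₀ : S} {r : ℕ → S × A}

lemma fst_eq_of_prefixWeight_ne_zero {n : ℕ} (hw : M.prefixWeight μ s₀ r (n + 1) ≠ 0) :
    (r 0).1 = s₀ := by
  rw [prefixWeight, prefList_succ] at hw
  exact fst_eq_of_pathWeightAux_ne_zero hw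

lemma stepProb_ne_zero_of_prefixWeight_ne_zero {n : ℕ}
    (hw : M.prefixWeight μ s₀ r (n + 2) ≠ 0) :
    M.stepProb (r n).1 (r n).2 (r (n + 1)).1 ≠ 0 := by
  rw [prefixWeight, prefList_add_two] at hw
  obtain ⟨h', s', hw'⟩ := pathWeightAux_ne_zero_of_append _ _ _ _ hw
  exact stepProb_ne_zero_of_pathWeightAux_ne_zero hw'

lemma prefixWeight_two_le :
    M.prefixWeight μ s₀ r 2 ≤ μ.act [] s₀ (r 0).2 * M.stepProb s₀ (r 0).2 (r 1).1 := by
  have hpref : prefList r 2 = [r 0, r 1] := prefList_add_two r 0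
  rw [prefixWeight, hpref, pathWeightAux_cons_cons]
  split_ifs
  · obtain ⟨t, b⟩ := r 1
    rw [pathWeightAux_singleton]
    gcongr
    exact mul_le_of_le_one_right' (PMF.coe_le_one _ _)
  · exact zero_le

lemma prefixWeight_wcons_const {a : A} {y : S × A} (ha : μ.act [] s₀ a = 1)
    (hy : M.stepProb y.1 y.2 y.1 = 1) (hact : ∀ h, μ.act h y.1 y.2 = 1) (n : ℕ) :
    M.prefixWeight μ s₀ (wcons (s₀, a) fun _ => y) n =
      if n ≤ 1 then 1 else M.stepProb s₀ a y.1 := by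
  match n with
  | 0 => rfl
  | 1 =>
    rw [prefixWeight, prefList_wcons_const, List.replicate_zero, pathWeightAux_singleton]
    simpa
  | n + 2 =>
    rw [prefixWeight, prefList_wcons_const, List.replicate_succ, pathWeightAux_cons_cons,
      if_pos rfl, ← List.replicate_succ, pathWeightAux_replicate hy hact, ha, mul_one, one_mul,
      if_neg (by omega)]

end PathWeight

section Product

variable {Q : Type*} (M : MDP S A L) (N : NBW L Q)

lemma prod_enabled_iff (s : S) (q : Q) (a : A) (q' : Q) :
    (M.prod N).enabled (s, q) (a, q') ↔ q' ∈ N.step q (M.label s) ∧ M.enabled s a := by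
  simp only [enabled, prod]
  split_ifs with h <;> simp [h]

lemma prod_stepProb (s : S) (q : Q) (a : A) (q' : Q) (s' : S) (q'' : Q) :
    (M.prod N).stepProb (s, q) (a, q') (s', q'') =
      if q' ∈ N.step q (M.label s) ∧ q'' = q' then M.stepProb s a s' else 0 := by
  simp only [stepProb, prod]
  by_cases h : q' ∈ N.step q (M.label s)
  · cases M.prob s a with
    | none => simp
    | some p =>
      simp only [if_pos h, Option.map_some, Option.elim_some, PMF.map_prodMk_right_apply]
      simp [h]
  · simp [h]

lemma prod_stepProb_ne_zero_iff (s : S) (q : Q) (a : A) (q' : Q) (s' : S) (q'' : Q) :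
    (M.prod N).stepProb (s, q) (a, q') (s', q'') ≠ 0 ↔
      q' ∈ N.step q (M.label s) ∧ q'' = q' ∧ M.stepProb s a s' ≠ 0 := by
  rw [prod_stepProb]
  split_ifs with h <;> simp_all

end Product

section Probability

open MeasureTheory

variable [Fintype S] [Fintype A] {M : MDP S A L} {μ : M.Strategy} {s₀ : S}
  {E : Set (ℕ → S × A)} {r r₁ r₂ : ℕ → S × A} {n : ℕ}

lemma sum_le_horizonProb (V : Finset (Fin n → S × A))
    (hV : ∀ v ∈ V, ∃ r ∈ E, prefList r n = List.ofFn v) :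
    ∑ v ∈ V, M.pathWeightAux μ [] s₀ (List.ofFn v) ≤ M.horizonProb μ s₀ n E :=
  calc ∑ v ∈ V, M.pathWeightAux μ [] s₀ (List.ofFn v)
      = ∑ v ∈ V, if ∃ r ∈ E, prefList r n = List.ofFn v then
          M.pathWeightAux μ [] s₀ (List.ofFn v) else 0 :=
        Finset.sum_congr rfl fun v hv => (if_pos (hV v hv)).symm
    _ ≤ M.horizonProb μ s₀ n E := Finset.sum_le_sum_of_subset (Finset.subset_univ V)

lemma prefixWeight_le_horizonProb (hr : r ∈ E) :
    M.prefixWeight μ s₀ r n ≤ M.horizonProb μ s₀ n E := by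
  have h := sum_le_horizonProb (M := M) (μ := μ) (s₀ := s₀) {fun i : Fin n => r i}
    (by simpa using ⟨r, hr, rfl⟩)
  rw [Finset.sum_singleton] at h
  exact h

lemma prefixWeight_add_le_horizonProb (h₁ : r₁ ∈ E) (h₂ : r₂ ∈ E)
    (hne : prefList r₁ n ≠ prefList r₂ n) :
    M.prefixWeight μ s₀ r₁ n + M.prefixWeight μ s₀ r₂ n ≤ M.horizonProb μ s₀ n E := by
  have hne' : (fun i : Fin n => r₁ i) ≠ fun i : Fin n => r₂ i :=
    fun h => hne (congrArg List.ofFn h)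
  have h := sum_le_horizonProb (M := M) (μ := μ) (s₀ := s₀)
    {fun i : Fin n => r₁ i, fun i : Fin n => r₂ i}
    (by simpa using ⟨⟨r₁, h₁, rfl⟩, ⟨r₂, h₂, rfl⟩⟩)
  rw [Finset.sum_pair hne'] at h
  exact h

lemma le_preMeasure_of_mem {c : ℝ≥0∞} (hr : r ∈ E)
    (hc : ∀ n, c ≤ M.prefixWeight μ s₀ r n) : c ≤ M.preMeasure μ s₀ E :=
  le_iInf₂ fun n _ => (hc n).trans (prefixWeight_le_horizonProb hr)

lemma add_le_preMeasure_of_mem {c₁ c₂ : ℝ≥0∞} (h₁ : r₁ ∈ E) (h₂ : r₂ ∈ E)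
    (hc₁ : ∀ n, c₁ ≤ M.prefixWeight μ s₀ r₁ n) (hc₂ : ∀ n, c₂ ≤ M.prefixWeight μ s₀ r₂ n)
    (hsame : ∀ n, prefList r₁ n = prefList r₂ n → c₁ + c₂ ≤ M.prefixWeight μ s₀ r₁ n) :
    c₁ + c₂ ≤ M.preMeasure μ s₀ E := by
  refine le_iInf₂ fun n _ => ?_
  by_cases hpref : prefList r₁ n = prefList r₂ n
  · exact (hsame n hpref).trans (prefixWeight_le_horizonProb h₁)
  · exact (add_le_add (hc₁ n) (hc₂ n)).trans (prefixWeight_add_le_horizonProb h₁ h₂ hpref)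

lemma Pr_le_preMeasure (E : Set (ℕ → S × A)) : M.Pr μ s₀ E ≤ M.preMeasure μ s₀ E :=
  OuterMeasure.ofFunction_le E

lemma Pr_le_one (E : Set (ℕ → S × A)) : M.Pr μ s₀ E ≤ 1 :=
  calc M.Pr μ s₀ E ≤ M.preMeasure μ s₀ Set.univ :=
        (measure_mono (Set.subset_univ E)).trans (Pr_le_preMeasure _)
    _ ≤ M.horizonProb μ s₀ 0 Set.univ := iInf₂_le 0 fun _ _ _ h => h
    _ ≤ 1 := by
      rw [horizonProb, Fintype.sum_unique]
      split_ifs <;> simp [pathWeightAux]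

lemma Pr_cylinder_le (r : ℕ → S × A) (n : ℕ) :
    M.Pr μ s₀ {r' | prefList r' n = prefList r n} ≤ M.prefixWeight μ s₀ r n := by
  refine (Pr_le_preMeasure _).trans <| (iInf₂_le n fun _ _ h h' => h.symm.trans h').trans ?_
  rw [horizonProb, Finset.sum_eq_single (fun i : Fin n => r i)]
  · exact ite_le_sup _ _ _ |>.trans (by simp [prefixWeight, prefList])
  · rintro v - hv
    rw [if_neg]
    rintro ⟨r', hr', hv'⟩
    exact hv (List.ofFn_inj.mp (hv'.symm.trans hr'))
  · simp

lemma Pr_prefixWeight_eq_zero (n : ℕ) :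
    M.Pr μ s₀ {r | M.prefixWeight μ s₀ r n = 0} = 0 := by
  refine le_antisymm ((Pr_le_preMeasure _).trans ?_) zero_le
  refine (iInf₂_le n fun r r' h hr => ?_).trans (Finset.sum_eq_zero fun v _ => ?_).le
  · simpa [prefixWeight, ← h] using hr
  · split_ifs with hv
    · obtain ⟨r, hr, hrv⟩ := hv
      rw [← hrv]
      exact hr
    · rfl

lemma le_Pr_of_mem {c : ℝ≥0∞} (hr : r ∈ E) (hc : ∀ n, c ≤ M.prefixWeight μ s₀ r n) :
    c ≤ M.Pr μ s₀ E := by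
  rw [Pr, OuterMeasure.ofFunction_apply]
  refine le_iInf₂ fun g hg => ?_
  obtain ⟨i, hi⟩ := Set.mem_iUnion.mp (hg hr)
  exact (le_preMeasure_of_mem hi hc).trans (ENNReal.le_tsum i)

lemma add_le_Pr_of_mem {c₁ c₂ : ℝ≥0∞} (h₁ : r₁ ∈ E) (h₂ : r₂ ∈ E)
    (hc₁ : ∀ n, c₁ ≤ M.prefixWeight μ s₀ r₁ n) (hc₂ : ∀ n, c₂ ≤ M.prefixWeight μ s₀ r₂ n)
    (hsame : ∀ n, prefList r₁ n = prefList r₂ n → c₁ + c₂ ≤ M.prefixWeight μ s₀ r₁ n) :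
    c₁ + c₂ ≤ M.Pr μ s₀ E := by
  rw [Pr, OuterMeasure.ofFunction_apply]
  refine le_iInf₂ fun g hg => ?_
  obtain ⟨i, hi⟩ := Set.mem_iUnion.mp (hg h₁)
  obtain ⟨j, hj⟩ := Set.mem_iUnion.mp (hg h₂)
  rcases eq_or_ne i j with rfl | hij
  · exact (add_le_preMeasure_of_mem hi hj hc₁ hc₂ hsame).trans (ENNReal.le_tsum i)
  · calc c₁ + c₂ ≤ M.preMeasure μ s₀ (g i) + M.preMeasure μ s₀ (g j) :=
          add_le_add (le_preMeasure_of_mem hi hc₁) (le_preMeasure_of_mem hj hc₂)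
      _ = ∑ k ∈ {i, j}, M.preMeasure μ s₀ (g k) :=
          (Finset.sum_pair (f := fun k => M.preMeasure μ s₀ (g k)) hij).symm
      _ ≤ ∑' k, M.preMeasure μ s₀ (g k) := ENNReal.sum_le_tsum _

end Probability

end MDP

lemma exNBW_complete : exNBW.Complete := by
  intro q σ
  fin_cases q <;> cases σ <;> simp [exNBW]

lemma exNBW_eq_three_of_le {α : ℕ → Bool} {r : ℕ → Fin 4}
    (hr : ∀ i, r (i + 1) ∈ exNBW.step (r i) (α i)) {i m : ℕ} (hi : r i = 3) (him : i ≤ m) :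
    r m = 3 := by
  induction m, him using Nat.le_induction with
  | base => exact hi
  | succ m _ ih => simpa [exNBW, ih] using hr m

lemma exNBW_ne_three {α : ℕ → Bool} {r : ℕ → Fin 4}
    (hr : ∀ i, r (i + 1) ∈ exNBW.step (r i) (α i))
    (hacc : ∀ n, ∃ m, n ≤ m ∧ r m ∈ exNBW.acc) (i : ℕ) : r i ≠ 3 := by
  intro hi
  obtain ⟨m, him, hm⟩ := hacc i
  simp [exNBW, exNBW_eq_three_of_le hr hi him] at hm

lemma exNBW_step_of_ne_three {q q' : Fin 4} {σ : Bool} (hq : q ≠ 0)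
    (h : q' ∈ exNBW.step q σ) (h' : q' ≠ 3) : q' = q ∧ σ = decide (q = 1) := by
  fin_cases q <;> cases σ <;> simp_all [exNBW]

lemma exNBW_lang : exNBW.lang = {(fun _ => true), wcons true (fun _ => false)} := by
  ext α
  constructor
  · rintro ⟨r, ⟨hr0, hr⟩, q, hq, hinf⟩
    have hne := exNBW_ne_three hr fun n => (hinf n).imp fun m ⟨hnm, hm⟩ => ⟨hnm, hm ▸ hq⟩
    have h0 : α 0 = true ∧ (r 1 = 1 ∨ r 1 = 2) := by
      have := hr 0
      cases h : α 0 <;> simp_all [exNBW]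
    have hr1 : r 1 ≠ 0 := by rcases h0.2 with h | h <;> simp [h]
    have hstay : ∀ i, r (i + 1) = r 1 := by
      intro i
      induction i with
      | zero => rfl
      | succ i ih =>
        exact (exNBW_step_of_ne_three (ih ▸ hr1) (hr (i + 1)) (hne (i + 2))).1.trans ih
    have hα : ∀ i, α (i + 1) = decide (r 1 = 1) := fun i => by
      simpa [hstay i] using (exNBW_step_of_ne_three (hstay i ▸ hr1) (hr (i + 1)) (hne (i + 2))).2
    rcases h0 with ⟨hα0, h1 | h1⟩
    · left
      funext n
      cases n with
      | zero => exact hα0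
      | succ n => simp [hα n, h1]
    · right
      funext n
      cases n with
      | zero => exact hα0
      | succ n => simp [hα n, h1, wcons]
  · rintro (rfl | rfl)
    · exact ⟨wcons 0 fun _ => 1, ⟨rfl, fun i => by cases i <;> simp [wcons, exNBW]⟩, 1,
        by simp [exNBW], fun n => ⟨n + 1, by omega, rfl⟩⟩
    · exact ⟨wcons 0 fun _ => 2, ⟨rfl, fun i => by cases i <;> simp [wcons, exNBW]⟩, 2,
        by simp [exNBW], fun n => ⟨n + 1, by omega, rfl⟩⟩

lemma exMC_enabled (s : Fin 3) : exMC.enabled s () := rfl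

lemma exMC_stepProb_zero (t : Fin 3) : exMC.stepProb 0 () t = exPMF t := by
  simp [MDP.stepProb, exMC]

lemma exMC_stepProb_self {s : Fin 3} (hs : s ≠ 0) : exMC.stepProb s () s = 1 := by
  fin_cases s <;> simp_all [MDP.stepProb, exMC]

lemma exPMF_one : exPMF 1 = 1 / 3 := by simp [exPMF]

lemma exPMF_two : exPMF 2 = 2 / 3 := by simp [exPMF]

lemma one_third_add_two_thirds : (1 / 3 : ℝ≥0∞) + 2 / 3 = 1 := by
  rw [ENNReal.div_add_div_same, show (1 + 2 : ℝ≥0∞) = 3 by norm_num]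
  exact ENNReal.div_self (by norm_num) (by norm_num)

noncomputable def exMCStrategy : exMC.Strategy :=
  .ofFun exMC (fun _ => ()) exMC_enabled

lemma exMC_prefixWeight_wcons_const {s : Fin 3} (hs : s ≠ 0) (n : ℕ) :
    exMC.prefixWeight exMCStrategy 0 (wcons (0, ()) fun _ => (s, ())) n =
      if n ≤ 1 then 1 else exPMF s := by
  rw [MDP.prefixWeight_wcons_const (μ := exMCStrategy) (MDP.Strategy.ofFun_act rfl)
    (exMC_stepProb_self hs) fun _ => MDP.Strategy.ofFun_act rfl, exMC_stepProb_zero]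

lemma PSem_exNBW_exMC : PSem exNBW exMC 0 = 1 := by
  refine le_antisymm (iSup_le fun μ => MDP.Pr_le_one _) (le_iSup_of_le exMCStrategy ?_)
  rw [← one_third_add_two_thirds]
  refine MDP.add_le_Pr_of_mem (r₁ := wcons (0, ()) fun _ => (1, ()))
    (r₂ := wcons (0, ()) fun _ => (2, ())) ?_ ?_ (fun n => ?_) (fun n => ?_) (fun n hn => ?_)
  · show _ ∈ exNBW.lang
    rw [exNBW_lang]
    exact Or.inl (funext fun n => by cases n <;> rfl)
  · show _ ∈ exNBW.lang
    rw [exNBW_lang]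
    exact Or.inr (funext fun n => by cases n <;> rfl)
  · rw [exMC_prefixWeight_wcons_const (by decide), exPMF_one]
    split_ifs
    exacts [le_self_add.trans_eq one_third_add_two_thirds, le_rfl]
  · rw [exMC_prefixWeight_wcons_const (by decide), exPMF_two]
    split_ifs
    exacts [le_add_self.trans_eq one_third_add_two_thirds, le_rfl]
  · rw [one_third_add_two_thirds, exMC_prefixWeight_wcons_const (by decide), if_pos]
    by_contra hn2
    have := congrFun (List.ofFn_inj.mp hn) ⟨1, by omega⟩
    simp [wcons] at this

section PSyn

open MDP MeasureTheory

lemma exMC_prod_start_of_mem_accRuns {r : ℕ → (Fin 3 × Fin 4) × (Unit × Fin 4)}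
    (h0 : (r 0).1 = (0, 0))
    (hstep : ∀ n, (exMC.prod exNBW).stepProb (r n).1 (r n).2 (r (n + 1)).1 ≠ 0)
    (hacc : r ∈ exNBW.accRuns) :
    (r 0 = ((0, 0), ((), 1)) ∧ r 1 = ((1, 1), ((), 1))) ∨
      (r 0 = ((0, 0), ((), 2)) ∧ r 1 = ((2, 2), ((), 2))) := by
  have hrun (n : ℕ) := (prod_stepProb_ne_zero_iff exMC exNBW ..).mp (hstep n)
  have hne := exNBW_ne_three (r := fun n => (r n).1.2) (α := fun n => exMC.label (r n).1.1)
    (fun n => (hrun n).2.1 ▸ (hrun n).1) hacc 2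
  have h0' := hrun 0
  have h1' := hrun 1
  clear hrun hstep hacc
  generalize r 0 = x0 at *
  generalize r 1 = x1 at *
  generalize r 2 = x2 at *
  obtain ⟨⟨s0, q0⟩, ⟨⟩, c0⟩ := x0
  obtain ⟨⟨s1, q1⟩, ⟨⟩, c1⟩ := x1
  obtain ⟨⟨s2, q2⟩, ⟨⟩, c2⟩ := x2
  simp only [Prod.mk.injEq] at h0 ⊢
  obtain ⟨rfl, rfl⟩ := h0
  simp only at h0' h1' hne
  obtain ⟨hc0, rfl, hs1⟩ := h0'
  obtain ⟨hc1, rfl, -⟩ := h1'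
  rw [exMC_stepProb_zero] at hs1
  fin_cases s1 <;> fin_cases q1 <;> fin_cases q2 <;> simp_all [exNBW, exMC, exPMF]

lemma exMC_prod_Pr_accRuns_le (μ : (exMC.prod exNBW).Strategy) :
    (exMC.prod exNBW).Pr μ (0, 0) exNBW.accRuns ≤ 2 / 3 := by
  set run₁ : ℕ → (Fin 3 × Fin 4) × (Unit × Fin 4) :=
    wcons ((0, 0), ((), 1)) fun _ => ((1, 1), ((), 1))
  set run₂ : ℕ → (Fin 3 × Fin 4) × (Unit × Fin 4) :=
    wcons ((0, 0), ((), 2)) fun _ => ((2, 2), ((), 2))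
  set null := ⋃ n, {r | (exMC.prod exNBW).prefixWeight μ (0, 0) r n = 0}
  have hcover : exNBW.accRuns ⊆ {r | prefList r 2 = prefList run₁ 2} ∪
      {r | prefList r 2 = prefList run₂ 2} ∪ null := by
    intro r hr
    by_cases hw : ∀ n, (exMC.prod exNBW).prefixWeight μ (0, 0) r n ≠ 0
    · rcases exMC_prod_start_of_mem_accRuns (fst_eq_of_prefixWeight_ne_zero (hw 1))
        (fun n => stepProb_ne_zero_of_prefixWeight_ne_zero (hw (n + 2))) hr with
        ⟨h0, h1⟩ | ⟨h0, h1⟩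
      · refine Or.inl (Or.inl ?_)
        show prefList r (0 + 2) = prefList _ (0 + 2)
        rw [prefList_add_two, prefList_add_two, h0, h1]
        rfl
      · refine Or.inl (Or.inr ?_)
        show prefList r (0 + 2) = prefList _ (0 + 2)
        rw [prefList_add_two, prefList_add_two, h0, h1]
        rfl
    · exact Or.inr (Set.mem_iUnion.mpr (not_forall_not.mp hw))
  calc (exMC.prod exNBW).Pr μ (0, 0) exNBW.accRuns
      ≤ (exMC.prod exNBW).Pr μ (0, 0) {r | prefList r 2 = prefList run₁ 2} +
        (exMC.prod exNBW).Pr μ (0, 0) {r | prefList r 2 = prefList run₂ 2} +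
        (exMC.prod exNBW).Pr μ (0, 0) null :=
        (measure_mono hcover).trans <|
          (measure_union_le _ _).trans (add_le_add_left (measure_union_le _ _) _)
    _ ≤ (exMC.prod exNBW).prefixWeight μ (0, 0) run₁ 2 +
        (exMC.prod exNBW).prefixWeight μ (0, 0) run₂ 2 := by
        rw [measure_iUnion_null fun n => Pr_prefixWeight_eq_zero n, add_zero]
        exact add_le_add (Pr_cylinder_le _ _) (Pr_cylinder_le _ _)
    _ ≤ μ.act [] (0, 0) ((), 1) * (1 / 3) + μ.act [] (0, 0) ((), 2) * (2 / 3) := by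
        refine add_le_add (prefixWeight_two_le.trans_eq ?_) (prefixWeight_two_le.trans_eq ?_) <;>
          simp [run₁, run₂, wcons, prod_stepProb, exMC_stepProb_zero, exPMF_one, exPMF_two,
            exNBW, show exMC.label 0 = true from rfl]
    _ ≤ (μ.act [] (0, 0) ((), 1) + μ.act [] (0, 0) ((), 2)) * (2 / 3) := by
        rw [add_mul]
        gcongr
        norm_num
    _ ≤ 2 / 3 := mul_le_of_le_one_left' (PMF.apply_add_apply_le_one _ (by decide))

noncomputable def exResolver (q : Fin 4) (σ : Bool) : Fin 4 :=
  if 2 ∈ exNBW.step q σ then 2 else (exNBW_complete q σ).some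

lemma exResolver_mem (q : Fin 4) (σ : Bool) : exResolver q σ ∈ exNBW.step q σ := by
  unfold exResolver
  split_ifs with h
  exacts [h, (exNBW_complete q σ).some_mem]

noncomputable def exProdStrategy : (exMC.prod exNBW).Strategy :=
  .ofFun _ (fun x => ((), exResolver x.2 (exMC.label x.1))) fun x =>
    (prod_enabled_iff exMC exNBW x.1 x.2 () _).mpr ⟨exResolver_mem _ _, exMC_enabled _⟩

lemma exProdStrategy_act {h : List ((Fin 3 × Fin 4) × (Unit × Fin 4))} {x : Fin 3 × Fin 4}
    (hx : 2 ∈ exNBW.step x.2 (exMC.label x.1)) : exProdStrategy.act h x ((), 2) = 1 :=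
  Strategy.ofFun_act (by simp [exResolver, hx])

lemma two_thirds_le_exMC_prod_Pr_accRuns :
    2 / 3 ≤ (exMC.prod exNBW).Pr exProdStrategy (0, 0) exNBW.accRuns := by
  refine le_Pr_of_mem (r := wcons ((0, 0), ((), 2)) fun _ => ((2, 2), ((), 2)))
    (fun n => ⟨n + 1, by omega, by simp [wcons, exNBW]⟩) fun n => ?_
  have hmem₀ : 2 ∈ exNBW.step 0 (exMC.label 0) := by simp [exNBW, exMC]
  have hmem₂ : 2 ∈ exNBW.step 2 (exMC.label 2) := by simp [exNBW, exMC]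
  rw [prefixWeight_wcons_const (exProdStrategy_act hmem₀)
    (by rw [prod_stepProb, if_pos ⟨hmem₂, rfl⟩, exMC_stepProb_self (by decide)])
    fun _ => exProdStrategy_act hmem₂, prod_stepProb,
    if_pos (⟨hmem₀, rfl⟩ : _ ∧ (2 : Fin 4) = 2), exMC_stepProb_zero, exPMF_two]
  split_ifs
  exacts [le_add_self.trans_eq one_third_add_two_thirds, le_rfl]

lemma PSyn_exNBW_exMC : PSyn exNBW exMC 0 = 2 / 3 :=
  le_antisymm (iSup_le exMC_prod_Pr_accRuns_le)
    (le_iSup_of_le exProdStrategy two_thirds_le_exMC_prod_Pr_accRuns)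

end PSyn

/-- `L(N) = {a^ω, a b^ω}`, `PSem_N^M(s₀) = 1`, `PSyn_N^M(s₀) = 2/3`,
and consequently `N` is not GFM. -/
theorem exNBW_not_gfm :
    exNBW.lang = {(fun _ => true), wcons true (fun _ => false)} ∧
    PSem exNBW exMC 0 = 1 ∧
    PSyn exNBW exMC 0 = 2/3 ∧
    ¬ exNBW.GFM := by
  refine ⟨exNBW_lang, PSem_exNBW_exMC, PSyn_exNBW_exMC, fun hgfm => ?_⟩
  have h := hgfm (Fin 3) Unit exMC (fun s => ⟨(), exMC_enabled s⟩) 0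
  rw [PSem_exNBW_exMC, PSyn_exNBW_exMC, ENNReal.div_eq_one_iff (by norm_num) (by norm_num)] at h
  norm_num at h
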